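/- arXiv:2510.16919 — 5 statements merged into one kernel-verified Lean document; each statement's English description precedes it below -/
import Mathlib

section
/- The fiber W_E decomposes orthogonally as W_E = ι(F) ⊕ E^{3/2}: the kernel of γ equals the orthogonal complement of the range of ι in W_E, where E^{3/2} := ker γ. -/
noncomputable section

variable {V E F : Type*}
  [NormedAddCommGroup V] [InnerProductSpace ℝ V]
  [NormedAddCommGroup E] [InnerProductSpace ℂ E] [FiniteDimensional ℂ E]
  [NormedAddCommGroup F] [InnerProductSpace ℂ F] [FiniteDimensional ℂ F]

/-- `γ : W_E → F`, `γ(Φ) = ∑ i, σ(e_i)(Φ_i)`. -/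
def gam {n : ℕ} (σ : V →ₗ[ℝ] (E →ₗ[ℂ] F)) (e : OrthonormalBasis (Fin n) ℝ V)
    (Φ : Fin n → E) : F :=
  ∑ i, σ (e i) (Φ i)

/-- `ι : F → W_E`, `(ι f)_i = (1/n)·σ(e_i)*(f)`. -/
def iot {n : ℕ} (σ : V →ₗ[ℝ] (E →ₗ[ℂ] F)) (e : OrthonormalBasis (Fin n) ℝ V)
    (f : F) : Fin n → E :=
  fun i => (1 / (n : ℂ)) • LinearMap.adjoint (σ (e i)) f

/-- `γ̃ : W_F → E`, `γ̃(Ψ) = ∑ i, σ(e_i)*(Ψ_i)`. -/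
def gamT {n : ℕ} (σ : V →ₗ[ℝ] (E →ₗ[ℂ] F)) (e : OrthonormalBasis (Fin n) ℝ V)
    (Ψ : Fin n → F) : E :=
  ∑ i, LinearMap.adjoint (σ (e i)) (Ψ i)

/-- `ι̃ : E → W_F`, `(ι̃ v)_i = (1/n)·σ(e_i)(v)`. -/
def iotT {n : ℕ} (σ : V →ₗ[ℝ] (E →ₗ[ℂ] F)) (e : OrthonormalBasis (Fin n) ℝ V)
    (v : E) : Fin n → F :=
  fun i => (1 / (n : ℂ)) • σ (e i) v

/-- `ξ ⊗ v ∈ W_E`, `(ξ⊗v)_i = ⟨ξ,e_i⟩·v`. -/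
def tensOf {n : ℕ} (e : OrthonormalBasis (Fin n) ℝ V) (ξ : V) (v : E) : Fin n → E :=
  fun i => (inner ℝ ξ (e i) : ℝ) • v

/-- the contraction `ξ ⌟ Φ = ∑ i, ⟨ξ,e_i⟩·Φ_i`. -/
def contr {n : ℕ} (e : OrthonormalBasis (Fin n) ℝ V) (ξ : V) (Φ : Fin n → E) : E :=
  ∑ i, (inner ℝ ξ (e i) : ℝ) • Φ i

/-! `ι` is `1/n` times the adjoint of `γ`, so `(range ι)ᗮ = ker γ` as soon as `n ≠ 0`. -/

theorem sum_inner_iot_eq_inner_gam {n : ℕ} (σ : V →ₗ[ℝ] (E →ₗ[ℂ] F))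
    (e : OrthonormalBasis (Fin n) ℝ V) (f : F) (Φ : Fin n → E) :
    ∑ i, inner ℂ (iot σ e f i) (Φ i) = (1 / (n : ℂ)) * inner ℂ f (gam σ e Φ) := by
  simp only [iot, gam, inner_smul_left, LinearMap.adjoint_inner_left, inner_sum,
    Finset.mul_sum, map_div₀, map_one, Complex.conj_natCast]

theorem forall_mul_inner_eq_zero_iff {𝕜 G : Type*} [RCLike 𝕜] [NormedAddCommGroup G]
    [InnerProductSpace 𝕜 G] {c : 𝕜} (hc : c ≠ 0) (x : G) :
    (∀ y : G, c * inner 𝕜 y x = 0) ↔ x = 0 := by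
  refine ⟨fun h => ?_, fun hx y => by simp [hx]⟩
  simpa [hc] using h x

theorem ker_gamma_eq_orthogonal_range_iota_general
    (n : ℕ) (hn : 3 ≤ n) (e : OrthonormalBasis (Fin n) ℝ V)
    (σ : V →ₗ[ℝ] (E →ₗ[ℂ] F)) :
    ∀ Φ : Fin n → E,
      gam σ e Φ = 0 ↔ ∀ f : F, ∑ i, (inner ℂ (iot σ e f i) (Φ i) : ℂ) = 0 := by
  intro Φ
  have hn0 : (1 / (n : ℂ)) ≠ 0 := by
    simpa using (show n ≠ 0 by omega)
  simp only [sum_inner_iot_eq_inner_gam, forall_mul_inner_eq_zero_iff hn0]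

/-- Orthogonal decomposition `W_E = ι(F) ⊕ E^{3/2}` with `E^{3/2} = ker γ`:
the kernel of `γ` equals the orthogonal complement of the range of `ι` in `W_E`, i.e.
`γ(Φ) = 0` if and only if `Φ` is orthogonal to `ι(f)` for every `f ∈ F`. -/
theorem ker_gamma_eq_orthogonal_range_iota
    (n : ℕ) (hn : 3 ≤ n) (e : OrthonormalBasis (Fin n) ℝ V)
    (σ : V →ₗ[ℝ] (E →ₗ[ℂ] F))
    (hcl : ∀ ξ η : V, ∀ v : E,
      LinearMap.adjoint (σ ξ) (σ η v) + LinearMap.adjoint (σ η) (σ ξ v)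
        = (2 * (inner ℝ ξ η : ℝ)) • v) :
    ∀ Φ : Fin n → E,
      gam σ e Φ = 0 ↔ ∀ f : F, ∑ i, (inner ℂ (iot σ e f i) (Φ i) : ℂ) = 0 :=
  ker_gamma_eq_orthogonal_range_iota_general n hn e σ
end
end

section
/- For every ξ ∈ V and every Φ ∈ ker γ one has (id⊗σ(ξ)*)((id − ι̃∘γ̃)((id⊗σ(ξ))(Φ))) = ‖ξ‖²·Φ − 2·(id⊗σ(ξ)*)(ι̃(ξ⌟Φ)). -/
noncomputable section

variable {V E F : Type*}
  [NormedAddCommGroup V] [InnerProductSpace ℝ V]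
  [NormedAddCommGroup E] [InnerProductSpace ℂ E] [FiniteDimensional ℂ E]
  [NormedAddCommGroup F] [InnerProductSpace ℂ F] [FiniteDimensional ℂ F]

def CliffordRelation (σ : V →ₗ[ℝ] (E →ₗ[ℂ] F)) : Prop :=
  ∀ ξ η : V, ∀ v : E,
    LinearMap.adjoint (σ ξ) (σ η v) + LinearMap.adjoint (σ η) (σ ξ v)
      = (2 * (inner ℝ ξ η : ℝ)) • v

namespace CliffordRelation

variable {σ : V →ₗ[ℝ] (E →ₗ[ℂ] F)}

theorem adjoint_apply_self_apply (hσ : CliffordRelation σ) (ξ : V) (v : E) :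
    LinearMap.adjoint (σ ξ) (σ ξ v) = (‖ξ‖ ^ 2 : ℝ) • v := by
  have h := hσ ξ ξ v
  rw [← two_smul ℝ, mul_smul] at h
  rw [smul_right_injective E two_ne_zero h, real_inner_self_eq_norm_sq]

theorem adjoint_apply_swap (hσ : CliffordRelation σ) (ξ η : V) (v : E) :
    LinearMap.adjoint (σ η) (σ ξ v)
      = (2 * (inner ℝ ξ η : ℝ)) • v - LinearMap.adjoint (σ ξ) (σ η v) :=
  eq_sub_of_add_eq' (hσ ξ η v)

theorem gamT_comp_eq {n : ℕ} (hσ : CliffordRelation σ) (e : OrthonormalBasis (Fin n) ℝ V)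
    (ξ : V) (Φ : Fin n → E) :
    gamT σ e (fun j => σ ξ (Φ j))
      = (2 : ℝ) • contr e ξ Φ - LinearMap.adjoint (σ ξ) (gam σ e Φ) := by
  simp only [gamT, gam, contr, fun j => hσ.adjoint_apply_swap ξ (e j) (Φ j),
    Finset.sum_sub_distrib, map_sum, Finset.smul_sum, smul_smul]

end CliffordRelation

theorem symbol_computation_on_ker_gamma_general
    (n : ℕ) (e : OrthonormalBasis (Fin n) ℝ V)
    (σ : V →ₗ[ℝ] (E →ₗ[ℂ] F))
    (hcl : ∀ ξ η : V, ∀ v : E,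
      LinearMap.adjoint (σ ξ) (σ η v) + LinearMap.adjoint (σ η) (σ ξ v)
        = (2 * (inner ℝ ξ η : ℝ)) • v) :
    ∀ (ξ : V) (Φ : Fin n → E), gam σ e Φ = 0 →
      (fun i => LinearMap.adjoint (σ ξ)
          ((fun j => σ ξ (Φ j)) i - iotT σ e (gamT σ e (fun j => σ ξ (Φ j))) i))
        = ‖ξ‖ ^ 2 • Φ
            - (2 : ℝ) • fun i => LinearMap.adjoint (σ ξ) (iotT σ e (contr e ξ Φ) i) := by
  intro ξ Φ hΦ
  have hσ : CliffordRelation σ := hcl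
  have hgamT : gamT σ e (fun j => σ ξ (Φ j)) = (2 : ℝ) • contr e ξ Φ := by
    rw [hσ.gamT_comp_eq, hΦ, map_zero, sub_zero]
  funext i
  simp only [hgamT, iotT, Pi.sub_apply, Pi.smul_apply, map_sub, hσ.adjoint_apply_self_apply,
    LinearMap.map_smul_of_tower, smul_comm _ (2 : ℝ)]

/-- For every `ξ ∈ V` and every `Φ ∈ ker γ`,
`(id⊗σ(ξ)*)((id − ι̃∘γ̃)((id⊗σ(ξ))(Φ))) = ‖ξ‖²·Φ − 2·(id⊗σ(ξ)*)(ι̃(ξ⌟Φ))`. -/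
theorem symbol_computation_on_ker_gamma
    (n : ℕ) (hn : 3 ≤ n) (e : OrthonormalBasis (Fin n) ℝ V)
    (σ : V →ₗ[ℝ] (E →ₗ[ℂ] F))
    (hcl : ∀ ξ η : V, ∀ v : E,
      LinearMap.adjoint (σ ξ) (σ η v) + LinearMap.adjoint (σ η) (σ ξ v)
        = (2 * (inner ℝ ξ η : ℝ)) • v) :
    ∀ (ξ : V) (Φ : Fin n → E), gam σ e Φ = 0 →
      (fun i => LinearMap.adjoint (σ ξ)
          ((fun j => σ ξ (Φ j)) i - iotT σ e (gamT σ e (fun j => σ ξ (Φ j))) i))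
        = ‖ξ‖ ^ 2 • Φ
            - (2 : ℝ) • fun i => LinearMap.adjoint (σ ξ) (iotT σ e (contr e ξ Φ) i) :=
  symbol_computation_on_ker_gamma_general n e σ hcl
end
end

section
/- For every ξ ∈ V and every Φ ∈ ker γ with ξ⌟Φ = 0 one has (id − ι∘γ)((id⊗σ(ξ)*)((id − ι̃∘γ̃)((id⊗σ(ξ))(Φ)))) = ‖ξ‖²·Φ; that is, σ_{3/2}(ξ)* σ_{3/2}(ξ) acts as multiplication by ‖ξ‖² on E^{3/2}(ξ) = {Φ ∈ ker γ : ξ⌟Φ = 0}. -/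
noncomputable section

variable {V E F : Type*}
  [NormedAddCommGroup V] [InnerProductSpace ℝ V]
  [NormedAddCommGroup E] [InnerProductSpace ℂ E] [FiniteDimensional ℂ E]
  [NormedAddCommGroup F] [InnerProductSpace ℂ F] [FiniteDimensional ℂ F]

/-! The Clifford relation gives `σ(ξ)*σ(ξ) = ‖ξ‖²` and, summed over the basis,
`γ̃((id⊗σ(ξ))Φ) = 2·(ξ⌟Φ) − σ(ξ)*(γΦ)`. For `Φ ∈ ker γ` with `ξ⌟Φ = 0` the correction
`ι̃∘γ̃` therefore vanishes, leaving `‖ξ‖²·Φ`, which again lies in `ker γ`, so `ι∘γ` vanishes too. -/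

section Clifford

variable {n : ℕ} (σ : V →ₗ[ℝ] (E →ₗ[ℂ] F)) (e : OrthonormalBasis (Fin n) ℝ V)

theorem adjoint_apply_self_apply_of_clifford
    (hcl : ∀ ξ η : V, ∀ v : E,
      LinearMap.adjoint (σ ξ) (σ η v) + LinearMap.adjoint (σ η) (σ ξ v)
        = (2 * (inner ℝ ξ η : ℝ)) • v)
    (ξ : V) (v : E) : LinearMap.adjoint (σ ξ) (σ ξ v) = ‖ξ‖ ^ 2 • v := by
  have h := hcl ξ ξ v
  rw [real_inner_self_eq_norm_sq, ← two_smul ℝ, mul_smul] at h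
  exact smul_right_injective E two_ne_zero h

theorem gamT_map_eq_of_clifford
    (hcl : ∀ ξ η : V, ∀ v : E,
      LinearMap.adjoint (σ ξ) (σ η v) + LinearMap.adjoint (σ η) (σ ξ v)
        = (2 * (inner ℝ ξ η : ℝ)) • v)
    (ξ : V) (Φ : Fin n → E) :
    gamT σ e (fun k => σ ξ (Φ k))
      = (2 : ℝ) • contr e ξ Φ - LinearMap.adjoint (σ ξ) (gam σ e Φ) := by
  have anticomm : ∀ i, LinearMap.adjoint (σ (e i)) (σ ξ (Φ i))
      = (2 : ℝ) • (inner ℝ ξ (e i) : ℝ) • Φ i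
        - LinearMap.adjoint (σ ξ) (σ (e i) (Φ i)) := by
    intro i
    rw [← mul_smul, real_inner_comm, ← hcl (e i) ξ (Φ i), add_sub_cancel_right]
  simp only [gamT, gam, contr, anticomm, Finset.sum_sub_distrib, ← Finset.smul_sum, map_sum]

end Clifford

theorem RS_symbol_on_E32_xi_general
    (n : ℕ) (e : OrthonormalBasis (Fin n) ℝ V)
    (σ : V →ₗ[ℝ] (E →ₗ[ℂ] F))
    (hcl : ∀ ξ η : V, ∀ v : E,
      LinearMap.adjoint (σ ξ) (σ η v) + LinearMap.adjoint (σ η) (σ ξ v)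
        = (2 * (inner ℝ ξ η : ℝ)) • v) :
    ∀ (ξ : V) (Φ : Fin n → E), gam σ e Φ = 0 → contr e ξ Φ = 0 →
      (fun i => (fun j => LinearMap.adjoint (σ ξ)
            ((fun k => σ ξ (Φ k)) j - iotT σ e (gamT σ e (fun k => σ ξ (Φ k))) j)) i
          - iot σ e (gam σ e (fun j => LinearMap.adjoint (σ ξ)
            ((fun k => σ ξ (Φ k)) j - iotT σ e (gamT σ e (fun k => σ ξ (Φ k))) j))) i)
        = ‖ξ‖ ^ 2 • Φ := by
  intro ξ Φ hγ hc
  have hγT : gamT σ e (fun k => σ ξ (Φ k)) = 0 := by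
    rw [gamT_map_eq_of_clifford σ e hcl, hγ, hc, map_zero, smul_zero, sub_zero]
  have hγ_smul : gam σ e (fun j => ‖ξ‖ ^ 2 • Φ j) = 0 := by
    simp only [gam, LinearMap.map_smul_of_tower, ← Finset.smul_sum]
    rw [← gam, hγ, smul_zero]
  funext i
  simp only [hγT, iotT, map_zero, smul_zero, sub_zero,
    adjoint_apply_self_apply_of_clifford σ hcl, hγ_smul, iot, Pi.smul_apply]

/-- For every `ξ ∈ V` and every `Φ ∈ ker γ` with `ξ⌟Φ = 0`,
`(id − ι∘γ)((id⊗σ(ξ)*)((id − ι̃∘γ̃)((id⊗σ(ξ))(Φ)))) = ‖ξ‖²·Φ`; that is,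
`σ_{3/2}(ξ)* σ_{3/2}(ξ)` acts as multiplication by `‖ξ‖²` on
`E^{3/2}(ξ) = {Φ ∈ ker γ : ξ⌟Φ = 0}`. -/
theorem RS_symbol_on_E32_xi
    (n : ℕ) (hn : 3 ≤ n) (e : OrthonormalBasis (Fin n) ℝ V)
    (σ : V →ₗ[ℝ] (E →ₗ[ℂ] F))
    (hcl : ∀ ξ η : V, ∀ v : E,
      LinearMap.adjoint (σ ξ) (σ η v) + LinearMap.adjoint (σ η) (σ ξ v)
        = (2 * (inner ℝ ξ η : ℝ)) • v) :
    ∀ (ξ : V) (Φ : Fin n → E), gam σ e Φ = 0 → contr e ξ Φ = 0 →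
      (fun i => (fun j => LinearMap.adjoint (σ ξ)
            ((fun k => σ ξ (Φ k)) j - iotT σ e (gamT σ e (fun k => σ ξ (Φ k))) j)) i
          - iot σ e (gam σ e (fun j => LinearMap.adjoint (σ ξ)
            ((fun k => σ ξ (Φ k)) j - iotT σ e (gamT σ e (fun k => σ ξ (Φ k))) j))) i)
        = ‖ξ‖ ^ 2 • Φ :=
  RS_symbol_on_E32_xi_general n e σ hcl
end
end

section
/- For every ξ ∈ V and every v ∈ E one has ξ⌟((id − ι∘γ)(ξ⊗v)) = ((n−1)/n)·‖ξ‖²·v. -/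
/-!
Expanding `ξ = ∑ ⟨ξ, e_i⟩ e_i` gives `γ(ξ ⊗ v) = σ(ξ) v` and `ξ ⌟ ι(f) = (1/n) σ(ξ)* f`, while
`ξ ⌟ (ξ ⊗ v) = ‖ξ‖² v`. The Clifford relation at `η = ξ` says `σ(ξ)* σ(ξ) = ‖ξ‖²`, so the
contraction is `(1 - 1/n) ‖ξ‖² v`.
-/

noncomputable section

variable {V E F : Type*}
  [NormedAddCommGroup V] [InnerProductSpace ℝ V]
  [NormedAddCommGroup E] [InnerProductSpace ℂ E] [FiniteDimensional ℂ E]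
  [NormedAddCommGroup F] [InnerProductSpace ℂ F] [FiniteDimensional ℂ F]

theorem OrthonormalBasis.sum_inner_smul_eq {ι W : Type*} [Fintype ι] [NormedAddCommGroup W]
    [InnerProductSpace ℝ W] (b : OrthonormalBasis ι ℝ W) (x : W) :
    ∑ i, inner ℝ x (b i) • b i = x := by
  simpa only [real_inner_comm x] using b.sum_repr' x

theorem OrthonormalBasis.sum_inner_mul_self {ι W : Type*} [Fintype ι] [NormedAddCommGroup W]
    [InnerProductSpace ℝ W] (b : OrthonormalBasis ι ℝ W) (x : W) :
    ∑ i, inner ℝ x (b i) * inner ℝ x (b i) = ‖x‖ ^ 2 := by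
  rw [← real_inner_self_eq_norm_sq, ← b.sum_inner_mul_inner x x]
  simp only [real_inner_comm x]

theorem LinearMap.adjoint_real_smul {G H : Type*} [NormedAddCommGroup G] [InnerProductSpace ℂ G]
    [FiniteDimensional ℂ G] [NormedAddCommGroup H] [InnerProductSpace ℂ H] [FiniteDimensional ℂ H]
    (c : ℝ) (A : G →ₗ[ℂ] H) : LinearMap.adjoint (c • A) = c • LinearMap.adjoint A := by
  rw [← Complex.coe_smul, ← Complex.coe_smul, LinearMap.adjoint.map_smulₛₗ, Complex.conj_ofReal]

section

variable {n : ℕ} (σ : V →ₗ[ℝ] (E →ₗ[ℂ] F)) (e : OrthonormalBasis (Fin n) ℝ V)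

section

omit [FiniteDimensional ℂ E] [FiniteDimensional ℂ F]

theorem contr_sub (ξ : V) (Φ Ψ : Fin n → E) : contr e ξ (Φ - Ψ) = contr e ξ Φ - contr e ξ Ψ := by
  simp only [contr, Pi.sub_apply, smul_sub, Finset.sum_sub_distrib]

theorem contr_tensOf (ξ : V) (v : E) : contr e ξ (tensOf e ξ v) = (‖ξ‖ ^ 2) • v := by
  simp only [contr, tensOf, smul_smul, ← Finset.sum_smul, e.sum_inner_mul_self]

theorem gam_tensOf (ξ : V) (v : E) : gam σ e (tensOf e ξ v) = σ ξ v := by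
  conv_rhs => rw [← e.sum_inner_smul_eq ξ]
  simp only [gam, tensOf, map_sum, map_smul, LinearMap.sum_apply, LinearMap.smul_apply,
    LinearMap.map_smul_of_tower]

end

theorem adjoint_eq_sum_inner_smul (ξ : V) :
    LinearMap.adjoint (σ ξ) = ∑ i, inner ℝ ξ (e i) • LinearMap.adjoint (σ (e i)) := by
  conv_lhs => rw [← e.sum_inner_smul_eq ξ]
  simp only [map_sum, map_smul, LinearMap.adjoint_real_smul]

theorem contr_iot (ξ : V) (f : F) :
    contr e ξ (iot σ e f) = (1 / (n : ℂ)) • LinearMap.adjoint (σ ξ) f := by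
  simp only [contr, iot, adjoint_eq_sum_inner_smul σ e ξ, LinearMap.sum_apply,
    LinearMap.smul_apply, Finset.smul_sum, smul_comm (1 / (n : ℂ))]

end

theorem adjoint_apply_self_of_clifford (σ : V →ₗ[ℝ] (E →ₗ[ℂ] F))
    (hcl : ∀ ξ η : V, ∀ v : E,
      LinearMap.adjoint (σ ξ) (σ η v) + LinearMap.adjoint (σ η) (σ ξ v)
        = (2 * (inner ℝ ξ η : ℝ)) • v) (ξ : V) (v : E) :
    LinearMap.adjoint (σ ξ) (σ ξ v) = (‖ξ‖ ^ 2) • v := by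
  have h := hcl ξ ξ v
  rw [← two_smul ℝ, real_inner_self_eq_norm_sq, mul_smul] at h
  exact smul_right_injective E two_ne_zero h

/-- For every `ξ ∈ V` and every `v ∈ E`,
`ξ⌟((id − ι∘γ)(ξ⊗v)) = ((n−1)/n)·‖ξ‖²·v`. -/
theorem contraction_of_projected_tensor
    (n : ℕ) (hn : 3 ≤ n) (e : OrthonormalBasis (Fin n) ℝ V)
    (σ : V →ₗ[ℝ] (E →ₗ[ℂ] F))
    (hcl : ∀ ξ η : V, ∀ v : E,
      LinearMap.adjoint (σ ξ) (σ η v) + LinearMap.adjoint (σ η) (σ ξ v)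
        = (2 * (inner ℝ ξ η : ℝ)) • v) :
    ∀ (ξ : V) (v : E),
      contr e ξ (tensOf e ξ v - iot σ e (gam σ e (tensOf e ξ v)))
        = ((((n : ℝ) - 1) / (n : ℝ)) * ‖ξ‖ ^ 2) • v := by
  intro ξ v
  have hn0 : (n : ℂ) ≠ 0 := Nat.cast_ne_zero.mpr (by omega)
  rw [contr_sub, contr_tensOf, gam_tensOf, contr_iot, adjoint_apply_self_of_clifford σ hcl,
    ← Complex.coe_smul, smul_smul, ← Complex.coe_smul, ← sub_smul]
  congr 1
  push_cast
  field_simp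
end
end

section
/- The Rarita–Schwinger operator is elliptic: for every ξ ∈ V with ξ ≠ 0 and every Φ ∈ ker γ, if (id − ι̃∘γ̃)((id⊗σ(ξ))(Φ)) = 0 then Φ = 0; i.e. σ_{3/2}(ξ) : E^{3/2} → W_F is injective for ξ ≠ 0. -/
section

variable {V E F : Type*}
  [NormedAddCommGroup V] [InnerProductSpace ℝ V]
  [NormedAddCommGroup E] [InnerProductSpace ℂ E]
  [NormedAddCommGroup F] [InnerProductSpace ℂ F]

section Clifford

variable [FiniteDimensional ℂ E] [FiniteDimensional ℂ F]

def CliffordRelations (σ : V →ₗ[ℝ] (E →ₗ[ℂ] F)) : Prop :=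
  ∀ ξ η : V, ∀ v : E,
    LinearMap.adjoint (σ ξ) (σ η v) + LinearMap.adjoint (σ η) (σ ξ v)
      = (2 * (inner ℝ ξ η : ℝ)) • v

namespace CliffordRelations

variable {σ : V →ₗ[ℝ] (E →ₗ[ℂ] F)}

theorem adjoint_apply_self (hσ : CliffordRelations σ) (ξ : V) (v : E) :
    LinearMap.adjoint (σ ξ) (σ ξ v) = (‖ξ‖ ^ 2 : ℝ) • v := by
  have h := hσ ξ ξ v
  rw [← two_smul ℝ, real_inner_self_eq_norm_sq, mul_smul] at h
  exact smul_right_injective E two_ne_zero h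

theorem injective (hσ : CliffordRelations σ) {ξ : V} (hξ : ξ ≠ 0) :
    Function.Injective (σ ξ) := by
  refine (injective_iff_map_eq_zero _).mpr fun v hv => ?_
  have h := hσ.adjoint_apply_self ξ v
  rw [hv, map_zero, eq_comm, smul_eq_zero] at h
  exact h.resolve_left (by positivity)

theorem gamT_map_eq (hσ : CliffordRelations σ) {n : ℕ} (e : OrthonormalBasis (Fin n) ℝ V)
    (ξ : V) (Φ : Fin n → E) :
    gamT σ e (fun i => σ ξ (Φ i))
      = (2 : ℝ) • contr e ξ Φ - LinearMap.adjoint (σ ξ) (gam σ e Φ) := by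
  have hterm : ∀ i, LinearMap.adjoint (σ (e i)) (σ ξ (Φ i))
      = (2 : ℝ) • ((inner ℝ ξ (e i) : ℝ) • Φ i) - LinearMap.adjoint (σ ξ) (σ (e i) (Φ i)) := by
    intro i
    rw [smul_smul, ← real_inner_comm]
    exact eq_sub_of_add_eq (hσ (e i) ξ (Φ i))
  simp only [gamT, contr, gam, hterm, Finset.sum_sub_distrib, Finset.smul_sum, map_sum]

end CliffordRelations

end Clifford

theorem LinearMap.map_contr {n : ℕ} (e : OrthonormalBasis (Fin n) ℝ V) (ξ : V)
    (f : E →ₗ[ℂ] F) (Φ : Fin n → E) :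
    f (contr e ξ Φ) = contr e ξ (fun i => f (Φ i)) := by
  simp only [contr, map_sum, LinearMap.map_smul_of_tower]

theorem contr_iotT {n : ℕ} (σ : V →ₗ[ℝ] (E →ₗ[ℂ] F)) (e : OrthonormalBasis (Fin n) ℝ V)
    (ξ : V) (v : E) :
    contr e ξ (iotT σ e v) = (1 / (n : ℂ)) • σ ξ v := by
  have hξ : ∑ i, (inner ℝ ξ (e i) : ℝ) • e i = ξ := by
    simpa only [real_inner_comm] using e.sum_repr' ξ
  conv_rhs => rw [← hξ]
  simp only [contr, iotT, map_sum, map_smul, LinearMap.sum_apply, LinearMap.smul_apply,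
    Finset.smul_sum, smul_comm (1 / (n : ℂ))]

theorem iotT_zero {n : ℕ} (σ : V →ₗ[ℝ] (E →ₗ[ℂ] F)) (e : OrthonormalBasis (Fin n) ℝ V) :
    iotT σ e (0 : E) = 0 := by
  ext i
  simp [iotT]

theorem eq_zero_of_eq_two_div_smul {K M : Type*} [Field K] [CharZero K] [AddCommGroup M]
    [Module K M] {n : ℕ} (hn : n ≠ 2) {x : M} (h : x = (2 / n : K) • x) : x = 0 := by
  have hcoef : (1 - 2 / n : K) ≠ 0 := by
    rcases eq_or_ne (n : K) 0 with h0 | h0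
    · simp [h0]
    · rw [sub_ne_zero, ne_comm, Ne, div_eq_one_iff_eq h0]
      exact_mod_cast hn.symm
  have h' : (1 - 2 / n : K) • x = 0 := by rw [sub_smul, one_smul, ← h, sub_self]
  exact (smul_eq_zero.mp h').resolve_left hcoef

end

noncomputable section

variable {V E F : Type*}
  [NormedAddCommGroup V] [InnerProductSpace ℝ V]
  [NormedAddCommGroup E] [InnerProductSpace ℂ E] [FiniteDimensional ℂ E]
  [NormedAddCommGroup F] [InnerProductSpace ℂ F] [FiniteDimensional ℂ F]

/-- The Rarita–Schwinger operator is elliptic: for every `ξ ∈ V` with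
`ξ ≠ 0` and every `Φ ∈ ker γ`, if `(id − ι̃∘γ̃)((id⊗σ(ξ))(Φ)) = 0` then `Φ = 0`;
i.e. `σ_{3/2}(ξ) : E^{3/2} → W_F` is injective for `ξ ≠ 0`. -/
theorem RS_symbol_injective
    (n : ℕ) (hn : 3 ≤ n) (e : OrthonormalBasis (Fin n) ℝ V)
    (σ : V →ₗ[ℝ] (E →ₗ[ℂ] F))
    (hcl : ∀ ξ η : V, ∀ v : E,
      LinearMap.adjoint (σ ξ) (σ η v) + LinearMap.adjoint (σ η) (σ ξ v)
        = (2 * (inner ℝ ξ η : ℝ)) • v) :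
    ∀ ξ : V, ξ ≠ 0 → ∀ Φ : Fin n → E, gam σ e Φ = 0 →
      ((fun j => σ ξ (Φ j)) - iotT σ e (gamT σ e (fun j => σ ξ (Φ j)))) = 0 →
      Φ = 0 := by
  have hσ : CliffordRelations σ := hcl
  intro ξ hξ Φ hγ h
  set Ψ : Fin n → F := fun j => σ ξ (Φ j)
  have hΨ : Ψ = iotT σ e (gamT σ e Ψ) := sub_eq_zero.mp h
  have hw : gamT σ e Ψ = (2 : ℝ) • contr e ξ Φ := by
    rw [hσ.gamT_map_eq, hγ, map_zero, sub_zero]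
  have hu : σ ξ (contr e ξ Φ) = (2 / n : ℂ) • σ ξ (contr e ξ Φ) := by
    calc σ ξ (contr e ξ Φ) = contr e ξ (iotT σ e (gamT σ e Ψ)) := by
          rw [LinearMap.map_contr, ← hΨ]
      _ = (2 / n : ℂ) • σ ξ (contr e ξ Φ) := by
          rw [contr_iotT, hw, LinearMap.map_smul_of_tower, ← Complex.coe_smul, smul_smul]
          congr 1
          push_cast
          ring
  have hu0 : contr e ξ Φ = 0 :=
    (map_eq_zero_iff _ (hσ.injective hξ)).mp
      (eq_zero_of_eq_two_div_smul (by omega) hu)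
  have hΨ0 : Ψ = 0 := by rw [hΨ, hw, hu0, smul_zero, iotT_zero]
  funext j
  exact (map_eq_zero_iff _ (hσ.injective hξ)).mp (congrFun hΨ0 j)
end
end
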